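/- Let E be a finite-dimensional vector space over a field K of characteristic zero, let N : E → E be a K-linear endomorphism, and let c ∈ K with c ≠ 0 not a root of unity. If N is conjugate to c·N (i.e., there exists an automorphism φ of E with φ ∘ N ∘ φ⁻¹ = c·N), then N is nilpotent. -/

import Mathlib

/-!
Conjugate endomorphisms have the same characteristic polynomial, so `p = charpoly N` equals
`charpoly (c • N)`. The latter is homogeneous of degree `n = dim E` in `(X, c)`, which gives
`p (c X) = cⁿ p (X)`. Comparing coefficients, `cⁱ pᵢ = cⁿ pᵢ`, and since `c^(n - i) ≠ 1` for
`i < n`, all lower coefficients vanish: `p = Xⁿ`, so `N` is nilpotent by Cayley–Hamilton.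
-/

open Polynomial

theorem Matrix.charpoly_smul_comp_C_mul_X {R n : Type*} [CommRing R] [Fintype n] [DecidableEq n]
    (M : Matrix n n R) (c : R) :
    (c • M).charpoly.comp (C c * X) = C c ^ Fintype.card n * M.charpoly := by
  have hmat : (compRingHom (C c * X)).mapMatrix (charmatrix (c • M)) = C c • charmatrix M := by
    ext i j
    by_cases hij : i = j
    · subst hij; simp [charmatrix_apply_eq, mul_sub]
    · simp [charmatrix_apply_ne _ _ _ hij]
  rw [Matrix.charpoly, ← coe_compRingHom_apply, RingHom.map_det, hmat, Matrix.det_smul,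
    Matrix.charpoly]

theorem LinearMap.charpoly_smul_comp_C_mul_X {R M : Type*} [CommRing R] [Nontrivial R]
    [AddCommGroup M] [Module R M] [Module.Free R M] [Module.Finite R M] (f : Module.End R M) (c : R) :
    (c • f).charpoly.comp (C c * X) = C c ^ Module.finrank R M * f.charpoly := by
  let b := Module.Free.chooseBasis R M
  rw [← f.charpoly_toMatrix b, ← (c • f).charpoly_toMatrix b, map_smul,
    Matrix.charpoly_smul_comp_C_mul_X, Module.finrank_eq_card_chooseBasisIndex]

theorem Polynomial.Monic.eq_X_pow_of_comp_C_mul_X_eq {R : Type*} [CommRing R] [IsDomain R]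
    {p : R[X]} (hp : p.Monic) {c : R} (hc0 : c ≠ 0) (hc : ∀ k : ℕ, 1 ≤ k → c ^ k ≠ 1)
    (h : p.comp (C c * X) = C c ^ p.natDegree * p) :
    p = X ^ p.natDegree := by
  ext i
  rcases lt_trichotomy i p.natDegree with hi | rfl | hi
  · have hcoeff : p.coeff i * c ^ i = c ^ i * c ^ (p.natDegree - i) * p.coeff i := by
      rw [← pow_add, Nat.add_sub_cancel' hi.le, ← coeff_C_mul, C_pow, ← h, comp_C_mul_X_coeff]
    have hvanish : (c ^ (p.natDegree - i) - 1) * p.coeff i = 0 := by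
      apply mul_left_cancel₀ (pow_ne_zero i hc0)
      linear_combination -hcoeff
    rw [coeff_X_pow, if_neg hi.ne]
    exact (mul_eq_zero.mp hvanish).resolve_left (sub_ne_zero.mpr (hc _ (by omega)))
  · rw [coeff_X_pow_self, hp.coeff_natDegree]
  · rw [coeff_X_pow, if_neg hi.ne', coeff_eq_zero_of_natDegree_lt hi]

theorem stmt2_general {K E : Type*} [Field K] [AddCommGroup E] [Module K E]
    [FiniteDimensional K E] (N : Module.End K E) (c : K) (hc0 : c ≠ 0)
    (hc : ∀ n : ℕ, 1 ≤ n → c ^ n ≠ 1)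
    (φ : E ≃ₗ[K] E)
    (h : φ.toLinearMap ∘ₗ N ∘ₗ φ.symm.toLinearMap = c • N) :
    IsNilpotent N := by
  have hconj : (c • N).charpoly = N.charpoly := by
    rw [← h]
    exact LinearEquiv.charpoly_conj φ N
  have hhom := N.charpoly_smul_comp_C_mul_X c
  rw [hconj, ← N.charpoly_natDegree] at hhom
  rw [LinearMap.isNilpotent_iff_charpoly, ← N.charpoly_natDegree]
  exact N.charpoly_monic.eq_X_pow_of_comp_C_mul_X_eq hc0 hc hhom

/-- Let `E` be a finite-dimensional vector space over a field `K` of characteristic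
zero, `N : E → E` a linear endomorphism, and `c ∈ K` nonzero and not a root of unity.
If `N` is conjugate to `c • N` via an automorphism `φ` of `E`, then `N` is nilpotent. -/
theorem stmt2 {K E : Type*} [Field K] [CharZero K] [AddCommGroup E] [Module K E]
    [FiniteDimensional K E] (N : Module.End K E) (c : K) (hc0 : c ≠ 0)
    (hc : ∀ n : ℕ, 1 ≤ n → c ^ n ≠ 1)
    (φ : E ≃ₗ[K] E)
    (h : φ.toLinearMap ∘ₗ N ∘ₗ φ.symm.toLinearMap = c • N) :
    IsNilpotent N :=
  stmt2_general N c hc0 hc φ h
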